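/- The four-dimensional algebra D_t over a field F of characteristic 0 with basis e₁, e₂ (even), ξ, η (odd) and multiplication e_i∘e_i = e_i, e₁∘e₂ = 0, e_i∘ξ = (1/2)ξ, e_i∘η = (1/2)η, ξ∘η = -η∘ξ = e₁ + t·e₂ (all other products determined by supercommutativity) is simple (has no nonzero proper two-sided ideals) if and only if t ≠ 0. -/

import Mathlib

/-- The multiplication of the 4-dimensional superalgebra `D_t`, written in the
basis `e₁, e₂` (even), `ξ, η` (odd): an element `(a₁, a₂, a₃, a₄)` stands for
`a₁e₁ + a₂e₂ + a₃ξ + a₄η`, and the table is `eᵢ∘eᵢ = eᵢ`, `e₁∘e₂ = 0`,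
`eᵢ∘ξ = (1/2)ξ`, `eᵢ∘η = (1/2)η`, `ξ∘η = -η∘ξ = e₁ + t·e₂`, `ξ∘ξ = η∘η = 0`. -/
def DtMul {F : Type*} [Field F] (t : F) :
    (F × F × F × F) → (F × F × F × F) → (F × F × F × F) :=
  fun a b =>
    (a.1 * b.1 + (a.2.2.1 * b.2.2.2 - a.2.2.2 * b.2.2.1),
     a.2.1 * b.2.1 + t * (a.2.2.1 * b.2.2.2 - a.2.2.2 * b.2.2.1),
     (2 : F)⁻¹ * ((a.1 + a.2.1) * b.2.2.1 + a.2.2.1 * (b.1 + b.2.1)),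
     (2 : F)⁻¹ * ((a.1 + a.2.1) * b.2.2.2 + a.2.2.2 * (b.1 + b.2.1)))

/-!
If `t = 0`, the `e₂`-coordinate of a product is the product of the `e₂`-coordinates, so the
kernel of that coordinate is a proper nonzero ideal. If `t ≠ 0`, multiplying a nonzero element
of an ideal by `e₁, e₂, ξ, η` isolates a nonzero multiple of `e₁`; then `ξ∘e₁ = ξ/2`,
`η∘e₁ = η/2` and `ξ∘η = e₁ + t e₂` put the whole basis into the ideal.
-/

namespace DtMul

variable {F : Type*} [Field F] {t : F} {I : Submodule F (F × F × F × F)}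

def IsIdeal (t : F) (I : Submodule F (F × F × F × F)) : Prop :=
  ∀ x : F × F × F × F, ∀ y ∈ I, DtMul t x y ∈ I ∧ DtMul t y x ∈ I

theorem IsIdeal.mul_mem (hI : IsIdeal t I) (x : F × F × F × F) {y : F × F × F × F}
    (hy : y ∈ I) : DtMul t x y ∈ I :=
  (hI x y hy).1

def e₂Coord : (F × F × F × F) →ₗ[F] F :=
  LinearMap.fst F F (F × F) ∘ₗ LinearMap.snd F F (F × F × F)

theorem isIdeal_zero_ker_e₂Coord : IsIdeal (0 : F) (LinearMap.ker e₂Coord) := by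
  intro x y hy
  simp_all [e₂Coord, DtMul]

theorem exists_isIdeal_ne_bot_ne_top_of_eq_zero :
    ∃ I : Submodule F (F × F × F × F), IsIdeal (0 : F) I ∧ I ≠ ⊥ ∧ I ≠ ⊤ := by
  refine ⟨LinearMap.ker e₂Coord, isIdeal_zero_ker_e₂Coord, fun h => ?_, fun h => ?_⟩
  · have he₁ : ((1, 0, 0, 0) : F × F × F × F) ∈ LinearMap.ker e₂Coord := by simp [e₂Coord]
    simp [h] at he₁
  · have he₂ : ((0, 1, 0, 0) : F × F × F × F) ∈ LinearMap.ker e₂Coord := h ▸ Submodule.mem_top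
    simp [e₂Coord] at he₂

/-- `e₁∘y - e₂∘y = (y₁, -y₂, 0, 0)`, and `e₁` times that is `(y₁, 0, 0, 0)`. -/
theorem IsIdeal.fst_e₁_mem (hI : IsIdeal t I) {y : F × F × F × F} (hy : y ∈ I) :
    ((y.1, 0, 0, 0) : F × F × F × F) ∈ I := by
  have hdiff : ((y.1, -y.2.1, 0, 0) : F × F × F × F) ∈ I := by
    convert I.sub_mem (hI.mul_mem (1, 0, 0, 0) hy) (hI.mul_mem (0, 1, 0, 0) hy) using 1
    simp [DtMul]
  convert hI.mul_mem (1, 0, 0, 0) hdiff using 1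
  simp [DtMul]

theorem IsIdeal.exists_fst_ne_zero [NeZero (2 : F)] (hI : IsIdeal t I) (hbot : I ≠ ⊥) :
    ∃ z ∈ I, z.1 ≠ 0 := by
  obtain ⟨⟨p, q, r, s⟩, hy, hy0⟩ := Submodule.exists_mem_ne_zero_of_ne_bot hbot
  by_contra! hfst
  -- The first coordinates of `y`, `ξ∘y`, `η∘y`, `η∘(ξ∘y)` are `p`, `s`, `-r`, `-(p + q)/2`.
  have hξy := hI.mul_mem (0, 0, 1, 0) hy
  have hp : p = 0 := hfst _ hy
  have hs : s = 0 := by simpa [DtMul] using hfst _ hξy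
  have hr : r = 0 := by simpa [DtMul] using hfst _ (hI.mul_mem (0, 0, 0, 1) hy)
  have hq : q = 0 := by
    simpa [DtMul, hp, two_ne_zero] using hfst _ (hI.mul_mem (0, 0, 0, 1) hξy)
  simp [hp, hq, hr, hs] at hy0

theorem IsIdeal.e₁_mem [NeZero (2 : F)] (hI : IsIdeal t I) (hbot : I ≠ ⊥) :
    ((1, 0, 0, 0) : F × F × F × F) ∈ I := by
  obtain ⟨z, hz, hz0⟩ := hI.exists_fst_ne_zero hbot
  rw [← I.smul_mem_iff hz0]
  simpa using hI.fst_e₁_mem hz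

theorem IsIdeal.eq_top_of_e₁_mem [NeZero (2 : F)] (ht : t ≠ 0) (hI : IsIdeal t I)
    (he₁ : ((1, 0, 0, 0) : F × F × F × F) ∈ I) : I = ⊤ := by
  have hξ : ((0, 0, 1, 0) : F × F × F × F) ∈ I := by
    rw [← I.smul_mem_iff (inv_ne_zero (two_ne_zero : (2 : F) ≠ 0))]
    simpa [DtMul] using hI.mul_mem (0, 0, 1, 0) he₁
  have hη : ((0, 0, 0, 1) : F × F × F × F) ∈ I := by
    rw [← I.smul_mem_iff (inv_ne_zero (two_ne_zero : (2 : F) ≠ 0))]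
    simpa [DtMul] using hI.mul_mem (0, 0, 0, 1) he₁
  have he₂ : ((0, 1, 0, 0) : F × F × F × F) ∈ I := by
    rw [← I.smul_mem_iff ht]
    convert I.sub_mem (hI.mul_mem (0, 0, 1, 0) hη) he₁ using 1
    simp [DtMul]
  rw [Submodule.eq_top_iff']
  rintro ⟨a, b, c, d⟩
  have hdecomp : ((a, b, c, d) : F × F × F × F) =
      a • (1, 0, 0, 0) + b • (0, 1, 0, 0) + c • (0, 0, 1, 0) + d • (0, 0, 0, 1) := by
    simp
  rw [hdecomp]
  exact I.add_mem (I.add_mem (I.add_mem (I.smul_mem a he₁) (I.smul_mem b he₂))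
    (I.smul_mem c hξ)) (I.smul_mem d hη)

end DtMul

/-- The four-dimensional superalgebra `D_t` over a field of
characteristic 0 is simple (has no nonzero proper two-sided ideals) if and only
if `t ≠ 0`. -/
theorem Dt_simple_iff
    (F : Type*) [Field F] [CharZero F] (t : F) :
    (∀ I : Submodule F (F × F × F × F),
      (∀ x : F × F × F × F, ∀ y ∈ I, DtMul t x y ∈ I ∧ DtMul t y x ∈ I) →
      I = ⊥ ∨ I = ⊤) ↔ t ≠ 0 := by
  constructor
  · rintro hsimple rfl
    obtain ⟨I, hI, hbot, htop⟩ := DtMul.exists_isIdeal_ne_bot_ne_top_of_eq_zero (F := F)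
    exact (hsimple I hI).elim hbot htop
  · intro ht I (hI : DtMul.IsIdeal t I)
    exact or_iff_not_imp_left.2 fun hbot => hI.eq_top_of_e₁_mem ht (hI.e₁_mem hbot)
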